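/- Let T' be the tree obtained by taking a full binary tree B of depth h rooted at s' with 2^h leaves, and replacing its i-th leaf by a rooted tree T_i (identifying the leaf with the root s_i of T_i). In the firefighter process on T' with fire at s', any strategy that protects exactly one vertex at each depth 1, …, h of B (with no protected vertex an ancestor of another and all ancestors of protected vertices burned) results in exactly one root s_i burning at time h, and exactly h + 1 vertices of B burn in total. -/

import Mathlib

attribute [local instance] Classical.propDecidable

/-- A finite rooted tree, given by a parent function and a depth function. -/
structure FFTree (V : Type*) where
  root : V
  parent : V → V
  depth : V → ℕ
  depth_root : depth root = 0
  parent_root : parent root = root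
  depth_parent : ∀ v, v ≠ root → depth v = depth (parent v) + 1

namespace FFTree

variable {V : Type*} [Fintype V] [DecidableEq V] (T : FFTree V)

/-- `u` is an ancestor of `v` (possibly `u = v`). -/
def IsAncestor (u v : V) : Prop := ∃ n : ℕ, T.parent^[n] v = u

/-- The subtree rooted at `v`: all descendants of `v`, including `v`. -/
noncomputable def subtree (v : V) : Finset V :=
  Finset.univ.filter (fun u => T.IsAncestor v u)

/-- The children of a vertex. -/
noncomputable def children (v : V) : Finset V :=
  Finset.univ.filter (fun u => u ≠ T.root ∧ T.parent u = v)

/-- The set of vertices burned by the end of time step `t` in the firefighter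
process on the rooted tree, where the fire starts at the root and `p i` is the
vertex protected in round `i` (if any); in each round the protection happens
first and then the fire spreads from burning vertices to their unprotected
children. -/
noncomputable def burn (p : ℕ → Option V) : ℕ → Finset V
  | 0 => {T.root}
  | t + 1 => burn p t ∪ Finset.univ.filter
      (fun v => v ≠ T.root ∧ T.parent v ∈ burn p t ∧ ∀ i ≤ t + 1, p i ≠ some v)

/-- `v` is protected at some round of the strategy `p`. -/
def Protected (p : ℕ → Option V) (v : V) : Prop := ∃ i, p i = some v

/-- A valid strategy: nothing is protected at time `0`, and a vertex protected in
round `t` is neither burned before round `t` nor previously protected. -/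
def Valid (p : ℕ → Option V) : Prop :=
  p 0 = none ∧ ∀ t v, p t = some v → v ∉ T.burn p (t - 1) ∧ ∀ i < t, p i ≠ some v

/-- `v` eventually burns under strategy `p`. -/
def Burns (p : ℕ → Option V) (v : V) : Prop := ∃ t, v ∈ T.burn p t

/-- `v` is saved (never burns) under strategy `p`. -/
def Saved (p : ℕ → Option V) (v : V) : Prop := ∀ t, v ∉ T.burn p t

/-- The number of vertices saved by strategy `p`. -/
noncomputable def savedCount (p : ℕ → Option V) : ℕ :=
  (Finset.univ.filter (T.Saved p)).card

/-- The number of vertices burned by strategy `p`. -/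
noncomputable def burnedCount (p : ℕ → Option V) : ℕ :=
  (Finset.univ.filter (T.Burns p)).card

end FFTree

/-!
Induction on `t ≤ h` shows that the burning vertices of depth `t` form a single vertex `u_t`:
`u_t` has two children, the protected vertex of level `t + 1` is one of them (its parent burns and
has depth `t`), and the other one is unprotected and catches fire. A vertex that burns at all
burns at the time equal to its depth, so the burning vertices of depth `≤ h` are `u_0, …, u_h`.
-/

namespace FFTree

variable {V : Type*} (T : FFTree V)

lemma ne_root_of_depth_ne_zero {v : V} (hv : T.depth v ≠ 0) : v ≠ T.root :=
  fun h => hv (h ▸ T.depth_root)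

variable [Fintype V] [DecidableEq V]

lemma mem_children {u c : V} : c ∈ T.children u ↔ c ≠ T.root ∧ T.parent c = u := by
  simp [children]

lemma depth_of_mem_children {u c : V} (hc : c ∈ T.children u) : T.depth c = T.depth u + 1 := by
  obtain ⟨hroot, rfl⟩ := (T.mem_children).1 hc
  exact T.depth_parent c hroot

variable (p : ℕ → Option V)

lemma mem_burn_zero {v : V} : v ∈ T.burn p 0 ↔ v = T.root := Finset.mem_singleton

lemma mem_burn_succ {t : ℕ} {v : V} :
    v ∈ T.burn p (t + 1) ↔ v ∈ T.burn p t ∨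
      (v ≠ T.root ∧ T.parent v ∈ T.burn p t ∧ ∀ i ≤ t + 1, p i ≠ some v) := by
  simp [burn]

lemma burn_mono : Monotone (T.burn p) :=
  monotone_nat_of_le_succ fun _ => Finset.subset_union_left

lemma depth_le_of_mem_burn {t : ℕ} {v : V} (hv : v ∈ T.burn p t) : T.depth v ≤ t := by
  induction t generalizing v with
  | zero => simp [(T.mem_burn_zero p).1 hv, T.depth_root]
  | succ t ih =>
    rcases (T.mem_burn_succ p).1 hv with hv | ⟨hroot, hpar, -⟩
    · exact (ih hv).trans t.le_succ
    · rw [T.depth_parent v hroot]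
      exact Nat.succ_le_succ (ih hpar)

lemma mem_burn_depth {t : ℕ} {v : V} (hv : v ∈ T.burn p t) : v ∈ T.burn p (T.depth v) := by
  induction t generalizing v with
  | zero => rwa [(T.mem_burn_zero p).1 hv, T.depth_root, ← (T.mem_burn_zero p).1 hv]
  | succ t ih =>
    rcases (T.mem_burn_succ p).1 hv with hv | ⟨hroot, hpar, hunprot⟩
    · exact ih hv
    · have hle := Nat.succ_le_succ (T.depth_le_of_mem_burn p hpar)
      rw [T.depth_parent v hroot, mem_burn_succ]
      exact Or.inr ⟨hroot, ih hpar, fun i hi => hunprot i (hi.trans hle)⟩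

lemma mem_burn_iff {t : ℕ} {v : V} : v ∈ T.burn p t ↔ T.Burns p v ∧ T.depth v ≤ t :=
  ⟨fun hv => ⟨⟨t, hv⟩, T.depth_le_of_mem_burn p hv⟩,
    fun ⟨⟨_, hs⟩, hle⟩ => T.burn_mono p hle (T.mem_burn_depth p hs)⟩

variable {T p}

lemma Valid.not_mem_burn (hp : T.Valid p) {v : V} (hv : Protected p v) (t : ℕ) :
    v ∉ T.burn p t := by
  obtain ⟨i, hi⟩ := hv
  have hi0 : i ≠ 0 := by rintro rfl; simp [hp.1] at hi
  have hbefore : v ∉ T.burn p (i - 1) := (hp.2 i v hi).1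
  induction t with
  | zero =>
    intro hv
    rw [(T.mem_burn_zero p).1 hv] at hbefore
    exact hbefore (T.burn_mono p (Nat.zero_le _) (Finset.mem_singleton_self _))
  | succ t ih =>
    intro hv
    rcases (T.mem_burn_succ p).1 hv with hv | ⟨-, -, hunprot⟩
    · exact ih hv
    · by_cases hit : i ≤ t + 1
      · exact hunprot i hit hi
      · exact hbefore (T.burn_mono p (by omega) hv)

variable (T p)

noncomputable def front (t : ℕ) : Finset V := (T.burn p t).filter (fun v => T.depth v = t)

lemma mem_front {t : ℕ} {v : V} : v ∈ T.front p t ↔ v ∈ T.burn p t ∧ T.depth v = t :=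
  Finset.mem_filter.trans (by simp)

lemma front_zero : T.front p 0 = {T.root} := by
  ext v
  rw [mem_front, mem_burn_zero, Finset.mem_singleton]
  exact ⟨And.left, fun hv => ⟨hv, hv ▸ T.depth_root⟩⟩

variable {T p}

lemma mem_front_succ (hp : T.Valid p) {t : ℕ} {v : V} :
    v ∈ T.front p (t + 1) ↔ v ≠ T.root ∧ T.parent v ∈ T.front p t ∧ ¬ Protected p v := by
  rw [mem_front, mem_front]
  constructor
  · rintro ⟨hv, hdepth⟩
    have hroot : v ≠ T.root := T.ne_root_of_depth_ne_zero (by omega)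
    have hnew : v ∉ T.burn p t := fun h => by have := T.depth_le_of_mem_burn p h; omega
    obtain ⟨-, hpar, -⟩ := ((T.mem_burn_succ p).1 hv).resolve_left hnew
    have := T.depth_parent v hroot
    exact ⟨hroot, ⟨hpar, by omega⟩, fun hprot => hp.not_mem_burn hprot _ hv⟩
  · rintro ⟨hroot, ⟨hpar, hdepth⟩, hunprot⟩
    refine ⟨(T.mem_burn_succ p).2 (Or.inr ⟨hroot, hpar, fun i _ hi => hunprot ⟨i, hi⟩⟩), ?_⟩
    rw [T.depth_parent v hroot, hdepth]

lemma front_succ_eq_erase (hp : T.Valid p) {t : ℕ} {u w : V} (hu : T.front p t = {u})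
    (hw : ∀ c ∈ T.children u, Protected p c ↔ c = w) :
    T.front p (t + 1) = (T.children u).erase w := by
  ext c
  rw [mem_front_succ hp, hu, Finset.mem_singleton, Finset.mem_erase]
  constructor
  · rintro ⟨hroot, hpar, hunprot⟩
    have hc : c ∈ T.children u := T.mem_children.2 ⟨hroot, hpar⟩
    exact ⟨fun hcw => hunprot ((hw c hc).2 hcw), hc⟩
  · rintro ⟨hcw, hc⟩
    exact ⟨(T.mem_children.1 hc).1, (T.mem_children.1 hc).2, fun hprot => hcw ((hw c hc).1 hprot)⟩

variable (T p)

lemma card_burn_eq_sum_card_front (n : ℕ) :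
    (T.burn p n).card = ∑ t ∈ Finset.range (n + 1), (T.front p t).card := by
  rw [Finset.card_eq_sum_card_fiberwise (f := T.depth) (t := Finset.range (n + 1))
    fun v hv => Finset.mem_range.2 (Nat.lt_succ_of_le (T.depth_le_of_mem_burn p hv))]
  refine Finset.sum_congr rfl fun t ht => congrArg Finset.card ?_
  ext v
  rw [Finset.mem_filter, mem_front, mem_burn_iff, mem_burn_iff]
  have := Finset.mem_range.1 ht
  constructor <;> rintro ⟨⟨hb, -⟩, rfl⟩ <;> exact ⟨⟨hb, by omega⟩, rfl⟩

end FFTree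

theorem FFTree.exists_front_eq_singleton {V : Type*} [Fintype V] [DecidableEq V] {T : FFTree V}
    {h : ℕ} (hbin : ∀ v : V, T.depth v < h → (T.children v).card = 2)
    {p : ℕ → Option V} (hp : T.Valid p) {P : Fin h → V}
    (hdepth : ∀ i : Fin h, T.depth (P i) = i.val + 1)
    (hprot : ∀ v : V, FFTree.Protected p v ↔ ∃ i : Fin h, P i = v)
    (hburnanc : ∀ i : Fin h, ∀ u : V,
      T.IsAncestor u (P i) → u ≠ P i → T.Burns p u) :
    ∀ {t : ℕ}, t ≤ h → ∃ u, T.front p t = {u} := by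
  intro t ht
  induction t with
  | zero => exact ⟨T.root, T.front_zero p⟩
  | succ t ih =>
    obtain ⟨u, hu⟩ := ih (by omega)
    set j : Fin h := ⟨t, by omega⟩
    have hu_depth : T.depth u = t := ((T.mem_front p).1 (hu ▸ Finset.mem_singleton_self u)).2
    have hPj_depth : T.depth (P j) = t + 1 := hdepth j
    have hPj_root : P j ≠ T.root := T.ne_root_of_depth_ne_zero (by omega)
    have hPj_parent : T.parent (P j) = u := by
      have hpar_depth : T.depth (T.parent (P j)) = t := by
        have := T.depth_parent (P j) hPj_root
        omega
      have hpar_burns : T.Burns p (T.parent (P j)) :=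
        hburnanc j _ ⟨1, rfl⟩ fun he => by rw [he] at hpar_depth; omega
      have hpar_front : T.parent (P j) ∈ T.front p t :=
        (T.mem_front p).2 ⟨(T.mem_burn_iff p).2 ⟨hpar_burns, hpar_depth.le⟩, hpar_depth⟩
      simpa [hu] using hpar_front
    have hPj_child : P j ∈ T.children u := T.mem_children.2 ⟨hPj_root, hPj_parent⟩
    have hprot_child : ∀ c ∈ T.children u, FFTree.Protected p c ↔ c = P j := by
      intro c hc
      have hc_depth := T.depth_of_mem_children hc
      rw [hprot]
      constructor
      · rintro ⟨k, rfl⟩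
        have hk : k = j := Fin.ext (by have := hdepth k; simp only [j]; omega)
        rw [hk]
      · rintro rfl
        exact ⟨j, rfl⟩
    rw [front_succ_eq_erase hp hu hprot_child, ← Finset.card_eq_one,
      Finset.card_erase_of_mem hPj_child, hbin u (by omega)]

theorem binary_tree_composition_burning_general
    {V : Type*} [Fintype V] [DecidableEq V] (T : FFTree V) (h : ℕ)
    (hbin : ∀ v : V, T.depth v < h → (T.children v).card = 2)
    (p : ℕ → Option V) (hp : T.Valid p) (P : Fin h → V)
    (hdepth : ∀ i : Fin h, T.depth (P i) = i.val + 1)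
    (hprot : ∀ v : V, FFTree.Protected p v ↔ ∃ i : Fin h, P i = v)
    (hburnanc : ∀ i : Fin h, ∀ u : V,
      T.IsAncestor u (P i) → u ≠ P i → T.Burns p u) :
    (∃! v : V, T.depth v = h ∧ v ∈ T.burn p h) ∧
    (Finset.univ.filter (fun v => T.depth v ≤ h ∧ T.Burns p v)).card = h + 1 := by
  have hfront : ∀ t ≤ h, ∃ u, T.front p t = {u} := fun _ ht =>
    FFTree.exists_front_eq_singleton hbin hp hdepth hprot hburnanc ht
  constructor
  · obtain ⟨u, hu⟩ := hfront h le_rfl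
    refine ⟨u, ?_, fun v hv => ?_⟩
    · exact ((T.mem_front p).1 (hu ▸ Finset.mem_singleton_self u)).symm
    · exact Finset.mem_singleton.1 (hu ▸ (T.mem_front p).2 hv.symm)
  · have hburnt : Finset.univ.filter (fun v => T.depth v ≤ h ∧ T.Burns p v) = T.burn p h := by
      ext v
      simp [T.mem_burn_iff p, and_comm]
    rw [hburnt, T.card_burn_eq_sum_card_front p h]
    calc ∑ t ∈ Finset.range (h + 1), (T.front p t).card
        = ∑ t ∈ Finset.range (h + 1), 1 := Finset.sum_congr rfl fun t ht =>
          Finset.card_eq_one.2 (hfront t (Nat.lt_succ_iff.1 (Finset.mem_range.1 ht)))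
      _ = h + 1 := by simp

/-- In the firefighter process on a tree `T'` whose first `h` levels form a full
binary tree (every vertex at depth `< h` has exactly two children), any strategy
that protects exactly one vertex at each depth `1, …, h` (none an ancestor of
another, and all proper ancestors of protected vertices burn) results in exactly
one vertex at depth `h` burning at time `h`, and exactly `h + 1` vertices of the
binary-tree part (depth `≤ h`) burn in total. -/
theorem binary_tree_composition_burning
    {V : Type*} [Fintype V] [DecidableEq V] (T : FFTree V) (h : ℕ) (hh : 1 ≤ h)
    (hbin : ∀ v : V, T.depth v < h → (T.children v).card = 2)
    (p : ℕ → Option V) (hp : T.Valid p) (P : Fin h → V)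
    (hdepth : ∀ i : Fin h, T.depth (P i) = i.val + 1)
    (hprot : ∀ v : V, FFTree.Protected p v ↔ ∃ i : Fin h, P i = v)
    (hanc : ∀ i j : Fin h, i ≠ j → ¬ T.IsAncestor (P i) (P j))
    (hburnanc : ∀ i : Fin h, ∀ u : V,
      T.IsAncestor u (P i) → u ≠ P i → T.Burns p u) :
    (∃! v : V, T.depth v = h ∧ v ∈ T.burn p h) ∧
    (Finset.univ.filter (fun v => T.depth v ≤ h ∧ T.Burns p v)).card = h + 1 :=
  binary_tree_composition_burning_general T h hbin p hp P hdepth hprot hburnanc
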